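/- For every integer k ≥ 1 and n ≥ 0, the cyclic shift κ is a bijection from the set P^k_n of k-Dyck paths of down-size n to itself, and the k-fold composition κ^k is the identity map on P^k_n. -/

import Mathlib

/-- A step of a `k`-Dyck path: `true` is an up-step `u = (1,1)`,
`false` is a down-step `d = (1,-k)`. -/
abbrev DStep := Bool

/-- The height change produced by a step of a `k`-Dyck path. -/
def stepVal (k : ℕ) (s : DStep) : ℤ := if s then 1 else -(k : ℤ)

/-- The height of the path `P` (with steps `u = +1`, `d = -k`) after its first `j` steps,
starting at height `start`. -/
def height (k : ℕ) (start : ℤ) (P : List DStep) (j : ℕ) : ℤ :=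
  start + ((P.take j).map (stepVal k)).sum

/-- `P` is a `k`-Dyck path: it starts and ends at height `0` and never goes below `0`.
Its down-size is `P.count false`, the number of its down-steps. -/
def IsDyck (k : ℕ) (P : List DStep) : Prop :=
  (∀ j ≤ P.length, 0 ≤ height k 0 P j) ∧ height k 0 P P.length = 0

/-- The set of positions of peaks (occurrences of the factor `ud`) of `P`:
`j` is a peak position if step `j` is `u` and step `j+1` is `d`. -/
def peakSet (P : List DStep) : Finset ℕ :=
  (Finset.range P.length).filter fun j => P.getD j false = true ∧ P.getD (j+1) true = false

/-- The number of all peaks of `P` (run starting at height `start`) whose height is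
`≡ i (mod k)`; the height of a peak `ud` is the height at the vertex between `u` and `d`. -/
def pkAll (k : ℕ) (start : ℤ) (i : ℕ) (P : List DStep) : ℕ :=
  ((peakSet P).filter fun j => height k start P (j+1) % (k : ℤ) = (i : ℤ)).card

/-- `pkMod k i P` is the statistic `pk_i(P)`: the number of non-rightmost peaks of `P`
(starting at height `0`) whose height is `≡ i (mod k)`. -/
def pkMod (k : ℕ) (i : ℕ) (P : List DStep) : ℕ :=
  ((peakSet P).filter fun j =>
    (∃ j' ∈ peakSet P, j < j') ∧ height k 0 P (j+1) % (k : ℤ) = (i : ℤ)).card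

/-- The statistic `pk(P)`: the total number of non-rightmost peaks of `P`. -/
def pkNR (P : List DStep) : ℕ :=
  ((peakSet P).filter fun j => ∃ j' ∈ peakSet P, j < j').card

/-- The statistic `dd(P)`: the number of double descents (occurrences of the factor `dd`). -/
def ddCount (P : List DStep) : ℕ :=
  ((Finset.range P.length).filter fun j =>
    P.getD j true = false ∧ P.getD (j+1) true = false).card

/-- The combined statistic `(pk_0, …, pk_{k-1}, dd)`:
for `i < k` it is `pk_i`, and for `i = k` it is `dd`. -/
def pathStat (k : ℕ) (P : List DStep) (i : Fin (k+1)) : ℕ :=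
  if (i : ℕ) < k then pkMod k i P else ddCount P

/-- The length of the maximal suffix of down-steps of `P`. -/
def downSuffixLen (P : List DStep) : ℕ := (P.reverse.takeWhile (fun s => !s)).length

/-- The permutation `π_n` of `{0, …, kn-1}` (as a function on `ℕ`), which in cycle
notation is `(k-1,…,1,0)(2k-1,…,k+1,k)⋯(kn-1,…,k(n-1)+1,k(n-1))`:
`j ↦ j + k - 1` if `j ≡ 0 (mod k)`, and `j ↦ j - 1` otherwise. -/
def cyclicPerm (k : ℕ) (j : ℕ) : ℕ := if j % k = 0 then j + (k - 1) else j - 1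

/-- `assembled k n f` is the path `f 0 ++ u ++ f 1 ++ u ++ ⋯ ++ f (kn-1) ++ u ++ d^n`,
i.e. the path `Q = Q_0^{(0)} u Q_1^{(1)} u ⋯ Q_{kn-1}^{(kn-1)} u d^n` with blocks
`Q_j = f j` (the `j`-lifting only changes the starting height, not the steps). -/
def assembled (k n : ℕ) (f : ℕ → List DStep) : List DStep :=
  (List.ofFn fun j : Fin (k * n) => f (j : ℕ) ++ [true]).flatten ++ List.replicate n false

/-!
The decomposition `Q = Q_0 u Q_1 u ⋯ Q_{km-1} u d^m` of a nonempty `k`-Dyck path is unique.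
Indeed, what follows the first separator `u` never takes an up-step from below the height at
which it starts, whereas a longer Dyck first block would return to height `0`, one level below that
start, and be followed by its own separator `u`. Hence `κ` permutes the blocks of any
decomposition by `π_m`, so `κ^t` permutes them by `π_m^t`, and `π_m^k = id` because `π_m`
rotates each block `{kq, …, kq + k - 1}` of `k` consecutive indices by one step.
-/

theorem Function.bijective_of_iterate_eq_id {α : Type*} {f : α → α} {k : ℕ} (hk : 0 < k)
    (h : f^[k] = id) : Function.Bijective f := by
  obtain ⟨k, rfl⟩ := Nat.exists_eq_succ_of_ne_zero hk.ne'
  exact ⟨Function.LeftInverse.injective (g := f^[k])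
      (congrFun ((f.iterate_succ k).symm.trans h)),
    Function.RightInverse.surjective (g := f^[k]) (congrFun ((f.iterate_succ' k).symm.trans h))⟩

section CyclicPerm

variable {k : ℕ}

theorem cyclicPerm_eq (hk : 0 < k) (j : ℕ) :
    cyclicPerm k j = k * (j / k) + (j % k + (k - 1)) % k := by
  have hj := Nat.div_add_mod j k
  have hr := Nat.mod_lt j hk
  unfold cyclicPerm
  split_ifs with h
  · rw [h, zero_add, Nat.mod_eq_of_lt (by omega)]
    omega
  · rw [show j % k + (k - 1) = (j % k - 1) + k by omega, Nat.add_mod_right,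
      Nat.mod_eq_of_lt (by omega)]
    omega

theorem cyclicPerm_iterate (hk : 0 < k) (s j : ℕ) :
    (cyclicPerm k)^[s] j = k * (j / k) + (j % k + s * (k - 1)) % k := by
  induction s with
  | zero => simp [Nat.mod_eq_of_lt (Nat.mod_lt j hk), Nat.div_add_mod]
  | succ s ih =>
    rw [Function.iterate_succ_apply', ih, cyclicPerm_eq hk, Nat.mul_add_div hk,
      Nat.div_eq_of_lt (Nat.mod_lt _ hk), add_zero, Nat.mul_add_mod, Nat.mod_mod,
      Nat.mod_add_mod, add_assoc, ← add_one_mul]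

theorem cyclicPerm_iterate_self (hk : 0 < k) : (cyclicPerm k)^[k] = id := by
  funext j
  rw [cyclicPerm_iterate hk, Nat.add_mul_mod_self_left, Nat.mod_mod, Nat.div_add_mod, id]

theorem mapsTo_cyclicPerm (m : ℕ) :
    Set.MapsTo (cyclicPerm k) (Set.Iio (k * m)) (Set.Iio (k * m)) := by
  intro j (hj : j < k * m)
  rcases Nat.eq_zero_or_pos k with rfl | hk
  · simp at hj
  have hq : j / k < m := Nat.div_lt_of_lt_mul hj
  show cyclicPerm k j < k * m
  calc cyclicPerm k j < k * (j / k) + k := by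
        rw [cyclicPerm_eq hk]; exact Nat.add_lt_add_left (Nat.mod_lt _ hk) _
    _ = k * (j / k + 1) := by ring
    _ ≤ k * m := Nat.mul_le_mul_left k hq

end CyclicPerm

section Blocks

variable {k : ℕ}

theorem height_append_of_le {s : ℤ} {a : List DStep} (R : List DStep) {j : ℕ}
    (hj : j ≤ a.length) : height k s (a ++ R) j = height k s a j := by
  rw [height, height, List.take_append_of_le_length hj]

theorem height_append_up (s : ℤ) (a X : List DStep) (i : ℕ) :
    height k s (a ++ true :: X) (a.length + 1 + i) =
      height k s a a.length + 1 + height k 0 X i := by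
  rw [add_assoc, add_comm 1 i]
  simp only [height, List.take_length_add_append, List.take_length, List.take_succ_cons,
    List.map_append, List.map_cons, List.sum_append, List.sum_cons, stepVal, if_true]
  ring

def NoUpBelowZero (k : ℕ) (X : List DStep) : Prop :=
  ∀ i, height k 0 X i < 0 → X[i]? ≠ some true

theorem getElem?_append_up (a X : List DStep) (i : ℕ) :
    (a ++ true :: X)[a.length + 1 + i]? = X[i]? := by
  rw [List.getElem?_append_right (by omega), show a.length + 1 + i - a.length = i + 1 by omega,
    List.getElem?_cons_succ]

theorem IsDyck.noUpBelowZero_append_up {a X : List DStep} (ha : IsDyck k a)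
    (hX : NoUpBelowZero k X) : NoUpBelowZero k (a ++ true :: X) := by
  intro j hj
  rcases le_or_gt j a.length with hle | hlt
  · rw [height_append_of_le _ hle] at hj
    exact absurd (ha.1 j hle) (not_le.2 hj)
  · obtain ⟨i, rfl⟩ : ∃ i, j = a.length + 1 + i := ⟨j - a.length - 1, by omega⟩
    rw [height_append_up, ha.2] at hj
    rw [getElem?_append_up]
    exact hX i (by omega)

theorem IsDyck.length_le_of_append_up_eq {a b X Y : List DStep} (ha : IsDyck k a)
    (hb : IsDyck k b) (hX : NoUpBelowZero k X) (h : a ++ true :: X = b ++ true :: Y) :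
    b.length ≤ a.length := by
  by_contra! hlt
  obtain ⟨i, hi⟩ : ∃ i, b.length = a.length + 1 + i := ⟨b.length - a.length - 1, by omega⟩
  have hreturn : height k 0 (a ++ true :: X) b.length = 0 := by
    rw [h, height_append_of_le _ le_rfl, hb.2]
  have hup : (a ++ true :: X)[b.length]? = some true := by
    simp [h]
  rw [hi, height_append_up, ha.2] at hreturn
  rw [hi, getElem?_append_up] at hup
  exact hX i (by omega) hup

theorem IsDyck.append_up_inj {a b X Y : List DStep} (ha : IsDyck k a) (hb : IsDyck k b)
    (hX : NoUpBelowZero k X) (hY : NoUpBelowZero k Y) (h : a ++ true :: X = b ++ true :: Y) :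
    a = b ∧ X = Y := by
  have hlen := le_antisymm (hb.length_le_of_append_up_eq ha hY h.symm)
    (ha.length_le_of_append_up_eq hb hX h)
  obtain ⟨hab, hXY⟩ := List.append_inj h hlen
  exact ⟨hab, (List.cons.inj hXY).2⟩

def blocksPath (F : List (List DStep)) (m : ℕ) : List DStep :=
  (F.map (· ++ [true])).flatten ++ List.replicate m false

theorem blocksPath_cons (a : List DStep) (F : List (List DStep)) (m : ℕ) :
    blocksPath (a :: F) m = a ++ true :: blocksPath F m := by
  simp [blocksPath]

theorem true_mem_blocksPath {F : List (List DStep)} {m : ℕ} :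
    true ∈ blocksPath F m ↔ F ≠ [] := by
  cases F <;> simp [blocksPath]

theorem noUpBelowZero_blocksPath {F : List (List DStep)} (hF : ∀ a ∈ F, IsDyck k a) (m : ℕ) :
    NoUpBelowZero k (blocksPath F m) := by
  induction F with
  | nil => intro i _; simp [blocksPath, List.getElem?_replicate]
  | cons a F ih =>
    rw [blocksPath_cons]
    exact (hF a (by simp)).noUpBelowZero_append_up (ih fun b hb => hF b (by simp [hb]))

theorem blocksPath_inj {F G : List (List DStep)} {m m' : ℕ} (hF : ∀ a ∈ F, IsDyck k a)
    (hG : ∀ b ∈ G, IsDyck k b) (h : blocksPath F m = blocksPath G m') : F = G ∧ m = m' := by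
  induction F generalizing G with
  | nil =>
    cases G with
    | nil => simpa [blocksPath] using h
    | cons b G => simpa [true_mem_blocksPath] using congrArg (true ∈ ·) h
  | cons a F ih =>
    cases G with
    | nil => simpa [true_mem_blocksPath] using congrArg (true ∈ ·) h
    | cons b G =>
      have hF' : ∀ c ∈ F, IsDyck k c := fun c hc => hF c (by simp [hc])
      have hG' : ∀ c ∈ G, IsDyck k c := fun c hc => hG c (by simp [hc])
      rw [blocksPath_cons, blocksPath_cons] at h
      obtain ⟨rfl, htail⟩ := (hF a (by simp)).append_up_inj (hG b (by simp))
        (noUpBelowZero_blocksPath hF' m) (noUpBelowZero_blocksPath hG' m') h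
      obtain ⟨rfl, rfl⟩ := ih hF' hG' htail
      exact ⟨rfl, rfl⟩

end Blocks

section Assembled

variable {k : ℕ}

theorem assembled_eq_blocksPath (m : ℕ) (f : ℕ → List DStep) :
    assembled k m f = blocksPath (List.ofFn fun j : Fin (k * m) => f j) m := by
  simp only [assembled, blocksPath, List.map_ofFn]
  rfl

theorem assembled_ne_nil {m : ℕ} (hm : 1 ≤ m) (f : ℕ → List DStep) :
    assembled k m f ≠ [] :=
  List.append_ne_nil_of_right_ne_nil _ fun h => by
    rw [List.replicate_eq_nil_iff] at h
    omega

theorem assembled_inj {m m' : ℕ} {f g : ℕ → List DStep} (hf : ∀ j < k * m, IsDyck k (f j))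
    (hg : ∀ j < k * m', IsDyck k (g j)) (h : assembled k m f = assembled k m' g) :
    m = m' ∧ ∀ j < k * m, f j = g j := by
  rw [assembled_eq_blocksPath, assembled_eq_blocksPath] at h
  obtain ⟨hfg, rfl⟩ := blocksPath_inj
    (fun a ha => by obtain ⟨j, rfl⟩ := List.mem_ofFn.mp ha; exact hf j j.isLt)
    (fun b hb => by obtain ⟨j, rfl⟩ := List.mem_ofFn.mp hb; exact hg j j.isLt) h
  exact ⟨rfl, fun j hj => congrFun (List.ofFn_inj.mp hfg) ⟨j, hj⟩⟩

theorem assembled_congr {m : ℕ} {f g : ℕ → List DStep} (h : ∀ j < k * m, f j = g j) :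
    assembled k m f = assembled k m g := by
  simp only [assembled_eq_blocksPath]
  congr 2
  funext j
  exact h j j.isLt

end Assembled

def IsCyclicShift (k n : ℕ)
    (κ : {P : List DStep // IsDyck k P ∧ P.count false = n} →
      {P : List DStep // IsDyck k P ∧ P.count false = n}) : Prop :=
  ∀ Q, (Q.val = [] → κ Q = Q) ∧
    (Q.val ≠ [] → ∃ m : ℕ, 1 ≤ m ∧ ∃ f : ℕ → List DStep,
      (∀ j < k * m, IsDyck k (f j)) ∧
      Q.val = assembled k m f ∧
      (κ Q).val = assembled k m (fun j => f (cyclicPerm k j)))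

namespace IsCyclicShift

variable {k n : ℕ} {κ : {P : List DStep // IsDyck k P ∧ P.count false = n} →
  {P : List DStep // IsDyck k P ∧ P.count false = n}}

theorem val_iterate (hκ : IsCyclicShift k n κ) {Q} {m : ℕ} (hm : 1 ≤ m)
    {f : ℕ → List DStep} (hf : ∀ j < k * m, IsDyck k (f j)) (hQ : Q.val = assembled k m f)
    (t : ℕ) :
    (κ^[t] Q).val = assembled k m (f ∘ (cyclicPerm k)^[t]) := by
  induction t with
  | zero => exact hQ
  | succ t ih =>
    have hg : ∀ j < k * m, IsDyck k ((f ∘ (cyclicPerm k)^[t]) j) :=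
      fun j hj => hf _ ((mapsTo_cyclicPerm m).iterate t hj)
    obtain ⟨m', -, f', hf', hQ', hκQ'⟩ := (hκ (κ^[t] Q)).2 (ih ▸ assembled_ne_nil hm _)
    obtain ⟨rfl, hgf'⟩ := assembled_inj hg hf' (ih.symm.trans hQ')
    rw [Function.iterate_succ_apply', hκQ']
    refine assembled_congr fun j hj => ?_
    rw [← hgf' _ (mapsTo_cyclicPerm m hj)]
    simp only [Function.comp_apply, Function.iterate_succ_apply]

theorem iterate_eq_id (hκ : IsCyclicShift k n κ) (hk : 0 < k) : κ^[k] = id := by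
  funext Q
  by_cases hQ : Q.val = []
  · exact Function.iterate_fixed ((hκ Q).1 hQ) k
  · obtain ⟨m, hm, f, hf, hQf, -⟩ := (hκ Q).2 hQ
    apply Subtype.ext
    rw [hκ.val_iterate hm hf hQf, cyclicPerm_iterate_self hk, Function.comp_id, id, hQf]

end IsCyclicShift

/-- The cyclic shift `κ` is a bijection of the set of `k`-Dyck paths of
down-size `n` to itself, and `κ^k` is the identity.  Here `κ` is characterized by its
defining property: the empty path is fixed, and a path with decomposition
`Q = Q_0^{(0)} u ⋯ Q_{km-1}^{(km-1)} u d^m` (with `m ≥ 1` the length of the maximal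
down-step suffix) is sent to the path with blocks permuted by `π_m = cyclicPerm k`. -/
theorem cyclic_shift_bijective_order_k (k n : ℕ) (hk : 1 ≤ k)
    (κ : {P : List DStep // IsDyck k P ∧ P.count false = n} →
         {P : List DStep // IsDyck k P ∧ P.count false = n})
    (hκ : ∀ Q, (Q.val = [] → κ Q = Q) ∧
      (Q.val ≠ [] → ∃ m : ℕ, 1 ≤ m ∧ ∃ f : ℕ → List DStep,
        (∀ j < k * m, IsDyck k (f j)) ∧
        Q.val = assembled k m f ∧
        (κ Q).val = assembled k m (fun j => f (cyclicPerm k j)))) :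
    Function.Bijective κ ∧ κ^[k] = id := by
  have hid : κ^[k] = id := IsCyclicShift.iterate_eq_id hκ hk
  exact ⟨Function.bijective_of_iterate_eq_id hk hid, hid⟩
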